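/- arXiv:2304.06598 — 5 statements merged into one kernel-verified Lean document; each statement's English description precedes it below -/
import Mathlib

section
/- Pointwise-convergent extensions in one variable: let K ⊆ ℝ be a nonempty compact set and let f_n : ℝ → ℝ be a sequence of functions, each continuous on K, such that for every x ∈ K the numerical sequence (f_n(x)) converges. Then there exist continuous functions g_n : ℝ → ℝ with g_n(x) = f_n(x) for all x ∈ K and all n, such that for every x ∈ ℝ the sequence (g_n(x)) converges. -/
open Set Filter

/-- Pointwise convergent sequences of continuous functions on a compact subset of `ℝ`
admit continuous extensions which converge pointwise on all of `ℝ`. -/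
theorem pointwise_convergent_extensions_one_variable
    (K : Set ℝ) (hK : IsCompact K) (hne : K.Nonempty)
    (f : ℕ → ℝ → ℝ) (hf : ∀ n, ContinuousOn (f n) K)
    (hconv : ∀ x ∈ K, ∃ l : ℝ, Tendsto (fun n => f n x) atTop (nhds l)) :
    ∃ g : ℕ → ℝ → ℝ, (∀ n, Continuous (g n)) ∧
      (∀ n, Set.EqOn (g n) (f n) K) ∧
      (∀ x : ℝ, ∃ l : ℝ, Tendsto (fun n => g n x) atTop (nhds l)) := by
  have hKc : IsClosed K := hK.isClosed
  -- Tietze extension for each n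
  have hext : ∀ n, ∃ F : ℝ → ℝ, Continuous F ∧ Set.EqOn F (f n) K := by
    intro n
    obtain ⟨G, hG⟩ := ContinuousMap.exists_restrict_eq (Y := ℝ) hKc
      ⟨fun x : K => f n x, (hf n).restrict⟩
    refine ⟨G, G.continuous, fun x hx => ?_⟩
    have := congrFun (congrArg ContinuousMap.toFun hG) ⟨x, hx⟩
    simpa using this
  choose F hFc hFeq using hext
  refine ⟨fun n x => F n x * max 0 (1 - n * Metric.infDist x K), ?_, ?_, ?_⟩
  · intro n
    exact (hFc n).mul (continuous_const.max
      (continuous_const.sub (continuous_const.mul (Metric.continuous_infDist_pt K))))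
  · intro n x hx
    have hd : Metric.infDist x K = 0 := by
      rw [Metric.infDist_zero_of_mem hx]
    simp [hd, hFeq n hx]
  · intro x
    by_cases hx : x ∈ K
    · obtain ⟨l, hl⟩ := hconv x hx
      refine ⟨l, ?_⟩
      have hd : Metric.infDist x K = 0 := Metric.infDist_zero_of_mem hx
      simpa [hd, fun n => hFeq n hx] using hl
    · refine ⟨0, ?_⟩
      have hd : 0 < Metric.infDist x K :=
        (hKc.notMem_iff_infDist_pos hne).mp hx
      have : ∀ᶠ n : ℕ in atTop, F n x * max 0 (1 - n * Metric.infDist x K) = 0 := by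
        filter_upwards [eventually_ge_atTop ⌈(Metric.infDist x K)⁻¹⌉₊] with n hn
        have h1 : (1 : ℝ) ≤ n * Metric.infDist x K := by
          rw [← inv_mul_cancel₀ hd.ne']
          gcongr
          calc (Metric.infDist x K)⁻¹ ≤ ⌈(Metric.infDist x K)⁻¹⌉₊ := Nat.le_ceil _
            _ ≤ n := by exact_mod_cast hn
        have : max 0 (1 - n * Metric.infDist x K) = 0 :=
          max_eq_left (by linarith)
        simp [this]
      exact tendsto_const_nhds.congr' (this.mono fun n h => h.symm)
end

section
/- Suprema and infima of uniformly bounded sequences of quasicontinuous functions are quasicontinuous: let f_n : ℝ^d → ℝ be a sequence of quasicontinuous functions for which there is M ∈ ℝ with |f_n(x)| ≤ M for all n and all x ∈ ℝ^d. Then the functions φ(x) = ⨆ n, f_n(x) and ψ(x) = ⨅ n, f_n(x) are quasicontinuous. -/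
/-!
Off one open set of small measure all `f n` are continuous, hence so are their partial suprema,
which increase pointwise to `⨆ n, f n`. By Egorov's theorem the convergence is uniform off a
further set of small measure, which outer regularity enlarges to an open one, and a uniform limit
of continuous functions is continuous. Infima follow by negation.
-/

open MeasureTheory

/-- Tonelli's notion of quasicontinuity: for every `ε > 0` there is an open set of
Lebesgue measure less than `ε` off which the function is continuous. -/
def Quasicontinuous {d : ℕ} (f : (Fin d → ℝ) → ℝ) : Prop :=
  ∀ ε : ℝ, 0 < ε → ∃ O : Set (Fin d → ℝ), IsOpen O ∧
    volume O < ENNReal.ofReal ε ∧ ContinuousOn f Oᶜ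

open Filter Topology Set
open scoped ENNReal

theorem tendsto_partialSups_ciSup {α : Type*} [ConditionallyCompleteLinearOrder α]
    [TopologicalSpace α] [SupConvergenceClass α] {f : ℕ → α} (hf : BddAbove (range f)) :
    Tendsto (partialSups f) atTop (𝓝 (⨆ n, f n)) := by
  rw [← ciSup_partialSups_eq hf]
  exact tendsto_atTop_ciSup (partialSups_monotone f) (bddAbove_range_partialSups.2 hf)

section Egorov

variable {X : Type*} [TopologicalSpace X] [MeasurableSpace X] [OpensMeasurableSpace X]
  {E : Type*} [NormedAddCommGroup E] [SecondCountableTopology E] [MeasurableSpace E]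
  [BorelSpace E] {μ : Measure X} {g : ℕ → X → E} {φ : X → E} {s : Set X} {ε : ℝ≥0∞}

theorem exists_isOpen_measure_lt_continuousOn_of_tendsto_of_measure_ne_top [μ.OuterRegular]
    (hs : MeasurableSet s) (hμs : μ s ≠ ∞) (hg : ∀ N, ContinuousOn (g N) s)
    (hlim : ∀ x ∈ s, Tendsto (fun N ↦ g N x) atTop (𝓝 (φ x))) (hε : 0 < ε) :
    ∃ V, IsOpen V ∧ μ V < ε ∧ ContinuousOn φ (s \ V) := by
  classical
  obtain ⟨r, -, hr0, hrε⟩ := ENNReal.lt_iff_exists_real_btwn.1 hε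
  -- Extended by `0` off `s`, the functions become globally measurable, as Egorov's theorem needs.
  have hG : ∀ N, StronglyMeasurable (s.piecewise (g N) 0) := fun N ↦
    ((hg N).measurable_piecewise continuousOn_const hs).stronglyMeasurable
  have hGlim : ∀ x, Tendsto (fun N ↦ s.piecewise (g N) 0 x) atTop (𝓝 (s.piecewise φ 0 x)) := by
    intro x
    by_cases hx : x ∈ s
    · simpa only [piecewise_eq_of_mem _ _ _ hx] using hlim x hx
    · simpa only [piecewise_eq_of_notMem _ _ _ hx] using tendsto_const_nhds
  have hH : StronglyMeasurable (s.piecewise φ 0) :=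
    stronglyMeasurable_of_tendsto _ hG (tendsto_pi_nhds.2 hGlim)
  obtain ⟨t, -, -, hμt, hunif⟩ := tendstoUniformlyOn_of_ae_tendsto hG hH hs hμs
    (Eventually.of_forall fun x _ ↦ hGlim x) (ENNReal.ofReal_pos.1 hr0)
  obtain ⟨V, htV, hVopen, hμV⟩ := Set.exists_isOpen_lt_of_lt t ε (hμt.trans_lt hrε)
  have hHcont : ContinuousOn (s.piecewise φ 0) (s \ t) :=
    hunif.continuousOn <| Frequently.of_forall fun N ↦
      ((hg N).mono sdiff_subset).congr fun x hx ↦ piecewise_eq_of_mem _ _ _ hx.1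
  refine ⟨V, hVopen, hμV, ?_⟩
  exact (hHcont.mono (sdiff_subset_sdiff_right htV)).congr fun x hx ↦
    (piecewise_eq_of_mem _ _ _ hx.1).symm

/-- A locally finite measure on a second countable space is spanned by countably many open sets
of finite measure; the finite-measure case applies on each of them. -/
theorem exists_isOpen_measure_lt_continuousOn_of_tendsto [SecondCountableTopology X]
    [IsLocallyFiniteMeasure μ] [μ.OuterRegular]
    (hs : MeasurableSet s) (hg : ∀ N, ContinuousOn (g N) s)
    (hlim : ∀ x ∈ s, Tendsto (fun N ↦ g N x) atTop (𝓝 (φ x))) (hε : 0 < ε) :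
    ∃ V, IsOpen V ∧ μ V < ε ∧ ContinuousOn φ (s \ V) := by
  let W := μ.finiteSpanningSetsInOpen'
  obtain ⟨δ, hδ0, hδε⟩ := ENNReal.exists_pos_sum_of_countable' hε.ne' ℕ
  have hloc : ∀ k, ∃ V, IsOpen V ∧ μ V < δ k ∧ ContinuousOn φ ((s ∩ W.set k) \ V) := fun k ↦
    exists_isOpen_measure_lt_continuousOn_of_tendsto_of_measure_ne_top
      (hs.inter (W.set_mem k).measurableSet)
      (measure_inter_lt_top_of_right_ne_top (W.finite k).ne).ne
      (fun N ↦ (hg N).mono inter_subset_left) (fun x hx ↦ hlim x hx.1) (hδ0 k)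
  choose V hVopen hμV hφV using hloc
  refine ⟨⋃ k, V k, isOpen_iUnion hVopen, ?_, ?_⟩
  · calc μ (⋃ k, V k) ≤ ∑' k, μ (V k) := measure_iUnion_le V
      _ ≤ ∑' k, δ k := ENNReal.tsum_le_tsum fun k ↦ (hμV k).le
      _ < ε := hδε
  · refine continuousOn_of_locally_continuousOn fun x _ ↦ ?_
    obtain ⟨k, hxk⟩ := mem_iUnion.1 (W.spanning.symm ▸ mem_univ x)
    refine ⟨W.set k, W.set_mem k, hxk, (hφV k).mono ?_⟩
    rintro y ⟨⟨hys, hyV⟩, hyk⟩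
    exact ⟨⟨hys, hyk⟩, fun hy ↦ hyV (mem_iUnion_of_mem k hy)⟩

end Egorov

namespace Quasicontinuous

variable {d : ℕ}

theorem iff_forall_ennreal {f : (Fin d → ℝ) → ℝ} :
    Quasicontinuous f ↔ ∀ ε : ℝ≥0∞, 0 < ε → ∃ O : Set (Fin d → ℝ), IsOpen O ∧
      volume O < ε ∧ ContinuousOn f Oᶜ := by
  refine ⟨fun hf ε hε ↦ ?_, fun hf ε hε ↦ hf _ (ENNReal.ofReal_pos.2 hε)⟩
  obtain ⟨r, -, hr0, hrε⟩ := ENNReal.lt_iff_exists_real_btwn.1 hε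
  obtain ⟨O, hO, hμO, hfO⟩ := hf r (ENNReal.ofReal_pos.1 hr0)
  exact ⟨O, hO, hμO.trans hrε, hfO⟩

theorem exists_isOpen_forall_continuousOn {ι : Type*} [Countable ι]
    {f : ι → (Fin d → ℝ) → ℝ} (hf : ∀ i, Quasicontinuous (f i)) {ε : ℝ≥0∞} (hε : 0 < ε) :
    ∃ U : Set (Fin d → ℝ), IsOpen U ∧ volume U < ε ∧ ∀ i, ContinuousOn (f i) Uᶜ := by
  obtain ⟨δ, hδ0, hδε⟩ := ENNReal.exists_pos_sum_of_countable' hε.ne' ι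
  choose O hOopen hμO hfO using fun i ↦ iff_forall_ennreal.1 (hf i) (δ i) (hδ0 i)
  refine ⟨⋃ i, O i, isOpen_iUnion hOopen, ?_, fun i ↦ (hfO i).mono ?_⟩
  · calc volume (⋃ i, O i) ≤ ∑' i, volume (O i) := measure_iUnion_le O
      _ ≤ ∑' i, δ i := ENNReal.tsum_le_tsum fun i ↦ (hμO i).le
      _ < ε := hδε
  · exact compl_subset_compl.2 (subset_iUnion O i)

theorem neg {f : (Fin d → ℝ) → ℝ} (hf : Quasicontinuous f) : Quasicontinuous (-f) :=
  fun ε hε ↦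
    let ⟨O, hO, hμO, hfO⟩ := hf ε hε
    ⟨O, hO, hμO, hfO.neg⟩

protected theorem iSup {f : ℕ → (Fin d → ℝ) → ℝ} (hf : ∀ n, Quasicontinuous (f n))
    (hbdd : ∀ x, BddAbove (range fun n ↦ f n x)) : Quasicontinuous fun x ↦ ⨆ n, f n x := by
  refine iff_forall_ennreal.2 fun ε hε ↦ ?_
  obtain ⟨U, hUopen, hμU, hfU⟩ := exists_isOpen_forall_continuousOn hf (ENNReal.half_pos hε.ne')
  obtain ⟨V, hVopen, hμV, hφV⟩ := exists_isOpen_measure_lt_continuousOn_of_tendsto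
    (μ := volume) (g := partialSups f) (φ := fun x ↦ ⨆ n, f n x)
    hUopen.isClosed_compl.measurableSet
    (fun N ↦ ContinuousOn.partialSups fun n _ ↦ hfU n)
    (fun x _ ↦ by simpa only [Pi.partialSups_apply] using tendsto_partialSups_ciSup (hbdd x))
    (ENNReal.half_pos hε.ne')
  refine ⟨U ∪ V, hUopen.union hVopen, ?_, by rwa [compl_union, ← sdiff_eq]⟩
  calc volume (U ∪ V) ≤ volume U + volume V := measure_union_le U V
    _ < ε / 2 + ε / 2 := ENNReal.add_lt_add hμU hμV
    _ = ε := ENNReal.add_halves ε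

protected theorem iInf {f : ℕ → (Fin d → ℝ) → ℝ} (hf : ∀ n, Quasicontinuous (f n))
    (hbdd : ∀ x, BddBelow (range fun n ↦ f n x)) : Quasicontinuous fun x ↦ ⨅ n, f n x := by
  have hneg := (Quasicontinuous.iSup (fun n ↦ (hf n).neg) fun x ↦ by
    simpa only [Pi.neg_apply, neg_range] using (hbdd x).neg).neg
  convert hneg using 2 with x
  simp only [Pi.neg_apply]
  rw [iSup, iInf, ← neg_range, Real.sSup_neg, neg_neg]

end Quasicontinuous

/-- Pointwise suprema and infima of a uniformly bounded sequence of quasicontinuous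
functions are quasicontinuous. -/
theorem quasicontinuous_iSup_iInf
    (d : ℕ) (f : ℕ → (Fin d → ℝ) → ℝ)
    (hq : ∀ n, Quasicontinuous (f n))
    (M : ℝ) (hM : ∀ n x, |f n x| ≤ M) :
    Quasicontinuous (fun x => ⨆ n, f n x) ∧
      Quasicontinuous (fun x => ⨅ n, f n x) :=
  ⟨Quasicontinuous.iSup hq fun x ↦ ⟨M, forall_mem_range.2 fun n ↦ (abs_le.1 (hM n x)).2⟩,
    Quasicontinuous.iInf hq fun x ↦ ⟨-M, forall_mem_range.2 fun n ↦ (abs_le.1 (hM n x)).1⟩⟩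
end

section
/- A set A ⊆ ℝ^d is Lebesgue measurable if and only if its indicator function is quasicontinuous: for A ⊆ ℝ^d, A is null-measurable with respect to the Lebesgue measure λ (i.e. A differs from a Borel set by a λ-null set) if and only if the indicator function 𝟙_A : ℝ^d → ℝ is quasicontinuous. -/
/-!
If `A` is null-measurable, outer regularity of the σ-finite Lebesgue measure gives open sets
`U ⊇ A` and `V ⊇ Aᶜ` whose excess over `A`, resp. `Aᶜ`, is small. Then `U ∩ V` is small, and its
complement is the union of the disjoint closed sets `Uᶜ ⊆ Aᶜ` and `Vᶜ ⊆ A`, on which `𝟙_A` is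
constant. Conversely, if `𝟙_A` is continuous off an open set `O`, then `Oᶜ ∩ A` is closed, so `A`
agrees with a countable union of closed sets up to the null set `⋂ₙ Oₙ`.
-/

open MeasureTheory

open Set
open scoped ENNReal

section Topology

variable {X β : Type*} [TopologicalSpace X] [TopologicalSpace β] [Zero β] {A : Set X}

lemma continuousOn_indicator_compl_inter {U V : Set X} {f : X → β} (hU : IsOpen U)
    (hV : IsOpen V) (hAU : A ⊆ U) (hAV : Aᶜ ⊆ V) (hf : ContinuousOn f Vᶜ) :
    ContinuousOn (A.indicator f) (U ∩ V)ᶜ := by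
  have hoff : ContinuousOn (A.indicator f) Uᶜ :=
    continuousOn_const.congr fun x hx => indicator_of_notMem (fun hxA => hx (hAU hxA)) f
  have hon : ContinuousOn (A.indicator f) Vᶜ :=
    hf.congr fun x hx => indicator_of_mem (not_not.1 fun hxA => hx (hAV hxA)) f
  rw [compl_inter]
  exact hoff.union_of_isClosed hon hU.isClosed_compl hV.isClosed_compl

lemma IsClosed.inter_of_continuousOn_indicator [T1Space β] {F : Set X} {c : β}
    (hF : IsClosed F) (hc : c ≠ 0) (h : ContinuousOn (A.indicator fun _ => c) F) :
    IsClosed (F ∩ A) := by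
  have hA : F ∩ A = F ∩ A.indicator (fun _ => c) ⁻¹' {c} := by
    ext x
    by_cases hx : x ∈ A <;> simp [hx, hc.symm]
  rw [hA]
  exact h.preimage_isClosed_of_isClosed hF isClosed_singleton

end Topology

namespace MeasureTheory

variable {X : Type*} [MeasurableSpace X] {μ : Measure X} {A : Set X}

theorem NullMeasurableSet.exists_isOpen_superset_measure_sdiff_lt
    [TopologicalSpace X] [μ.OuterRegular] [SigmaFinite μ] (hA : NullMeasurableSet A μ)
    {ε : ℝ≥0∞} (hε : ε ≠ 0) :
    ∃ U, A ⊆ U ∧ IsOpen U ∧ μ (U \ A) < ε := by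
  obtain ⟨δ, hδ, hδε⟩ := ENNReal.exists_pos_sum_of_countable hε ℕ
  have hpiece (n : ℕ) : ∃ U, A ∩ spanningSets μ n ⊆ U ∧ IsOpen U ∧
      μ (U \ (A ∩ spanningSets μ n)) < δ n := by
    have hfin : μ (A ∩ spanningSets μ n) ≠ ∞ :=
      measure_ne_top_of_subset inter_subset_right (measure_spanningSets_lt_top μ n).ne
    obtain ⟨U, hAU, hU, hμU⟩ :=
      (A ∩ spanningSets μ n).exists_isOpen_lt_add hfin (ENNReal.coe_ne_zero.2 (hδ n).ne')
    exact ⟨U, hAU, hU, measure_sdiff_lt_of_lt_add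
      (hA.inter (measurableSet_spanningSets μ n).nullMeasurableSet) hAU hfin hμU⟩
  choose U hAU hU hμU using hpiece
  have hA_iUnion : A = ⋃ n, A ∩ spanningSets μ n := by
    rw [← inter_iUnion, iUnion_spanningSets, inter_univ]
  refine ⟨⋃ n, U n, hA_iUnion.trans_subset (iUnion_mono hAU), isOpen_iUnion hU, ?_⟩
  calc μ ((⋃ n, U n) \ A) ≤ μ (⋃ n, U n \ (A ∩ spanningSets μ n)) :=
        measure_mono (iUnion_sdiff A U ▸ iUnion_mono fun n => sdiff_subset_sdiff_right
          inter_subset_left)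
    _ ≤ ∑' n, μ (U n \ (A ∩ spanningSets μ n)) := measure_iUnion_le _
    _ ≤ ∑' n, (δ n : ℝ≥0∞) := ENNReal.tsum_le_tsum fun n => (hμU n).le
    _ < ε := hδε

theorem nullMeasurableSet_of_forall_exists_measure_lt
    (h : ∀ ε : ℝ≥0∞, ε ≠ 0 → ∃ O, μ O < ε ∧ NullMeasurableSet (A \ O) μ) :
    NullMeasurableSet A μ := by
  choose O hO hAO using fun n : ℕ =>
    h (n : ℝ≥0∞)⁻¹ (ENNReal.inv_ne_zero.2 (ENNReal.natCast_ne_top n))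
  have hnull : μ (⋂ n, O n) = 0 :=
    le_antisymm (ge_of_tendsto' ENNReal.tendsto_inv_nat_nhds_zero fun n =>
      (measure_mono (iInter_subset O n)).trans (hO n).le) bot_le
  rw [← sdiff_union_inter A (⋂ n, O n), sdiff_iInter]
  exact (NullMeasurableSet.iUnion hAO).union
    (NullMeasurableSet.of_null (measure_mono_null inter_subset_right hnull))

end MeasureTheory

/-- A set is Lebesgue measurable if and only if its indicator function is
quasicontinuous. -/
theorem nullMeasurableSet_iff_quasicontinuous_indicator
    (d : ℕ) (A : Set (Fin d → ℝ)) :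
    NullMeasurableSet A (volume : Measure (Fin d → ℝ)) ↔
      Quasicontinuous (Set.indicator A (fun _ => (1 : ℝ))) := by
  constructor
  · intro hA ε hε
    have hε2 : ENNReal.ofReal ε / 2 ≠ 0 :=
      (ENNReal.half_pos (ENNReal.ofReal_pos.2 hε).ne').ne'
    obtain ⟨U, hAU, hU, hUA⟩ := hA.exists_isOpen_superset_measure_sdiff_lt hε2
    obtain ⟨V, hAV, hV, hVA⟩ := hA.compl.exists_isOpen_superset_measure_sdiff_lt hε2
    refine ⟨U ∩ V, hU.inter hV, ?_,
      continuousOn_indicator_compl_inter hU hV hAU hAV continuousOn_const⟩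
    have hUV : U ∩ V ⊆ (U \ A) ∪ (V \ Aᶜ) := fun x hx => by
      by_cases hxA : x ∈ A
      exacts [Or.inr ⟨hx.2, not_not.2 hxA⟩, Or.inl ⟨hx.1, hxA⟩]
    calc volume (U ∩ V) ≤ volume (U \ A) + volume (V \ Aᶜ) :=
          (measure_mono hUV).trans (measure_union_le _ _)
      _ < ENNReal.ofReal ε / 2 + ENNReal.ofReal ε / 2 := ENNReal.add_lt_add hUA hVA
      _ = ENNReal.ofReal ε := ENNReal.add_halves _
  · intro h
    refine nullMeasurableSet_of_forall_exists_measure_lt fun ε hε => ?_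
    obtain ⟨r, -, hr, hrε⟩ := ENNReal.lt_iff_exists_real_btwn.1 (pos_iff_ne_zero.2 hε)
    obtain ⟨O, hO, hOr, hcont⟩ := h r (ENNReal.ofReal_pos.1 hr)
    refine ⟨O, hOr.trans hrε, ?_⟩
    rw [sdiff_eq_compl_inter]
    exact (hO.isClosed_compl.inter_of_continuousOn_indicator one_ne_zero
      hcont).measurableSet.nullMeasurableSet
end

section
/- Vitali–Lebesgue theorem: let a < b and let f : ℝ → ℝ be bounded on [a,b]. Then f is Riemann integrable on [a,b] (i.e. there exists I ∈ ℝ which is its Riemann integral) if and only if the set of points x ∈ [a,b] at which f is not continuous within [a,b] (¬ ContinuousWithinAt f (Icc a b) x) has one-dimensional Lebesgue measure zero. -/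
open Set MeasureTheory

/-- `f` is Riemann integrable on `[a,b]` with integral `I`: for every `ε > 0` there is
`δ > 0` such that every tagged partition of `[a,b]` of mesh less than `δ` has Riemann
sum within `ε` of `I`. -/
def RiemannIntegralOn (f : ℝ → ℝ) (a b I : ℝ) : Prop :=
  ∀ ε : ℝ, 0 < ε → ∃ δ : ℝ, 0 < δ ∧
    ∀ (N : ℕ) (x t : ℕ → ℝ),
      x 0 = a → x N = b →
      (∀ i < N, x i < x (i + 1)) →
      (∀ i < N, x (i + 1) - x i < δ) →
      (∀ i < N, t i ∈ Icc (x i) (x (i + 1))) →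
      |(∑ i ∈ Finset.range N, f (t i) * (x (i + 1) - x i)) - I| < ε

/-!
If the discontinuities are null, they lie in an open set `U` of small measure, and on the compact
set `[a,b] \ U` the oscillation of `f` is uniformly small at some scale `δ`. On each interval of a
`δ`-fine tagged partition, `|f tᵢ - f y| ≤ ε + 2C·𝟙_U y`, so integrating over `[a,b]` puts the
Riemann sum within `ε (b - a) + 2C |U|` of the Lebesgue integral of `f` (which exists, `f` being
bounded and a.e. continuous).

Conversely, the discontinuities are the union over `n` of the sets `D` where the oscillation
exceeds `c = 1/(n+1)`. On every interval of a fine partition whose interior meets `D` one can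
pick two tags at which `f` differs by more than `c`; the two resulting Riemann sums differ by at
least `c` times the total length of those intervals, which is therefore small. Up to the finitely
many nodes, these intervals cover `D`.
-/

open scoped Topology

structure IsFinePartition (a b δ : ℝ) (N : ℕ) (x : ℕ → ℝ) : Prop where
  first : x 0 = a
  last : x N = b
  lt_succ : ∀ i < N, x i < x (i + 1)
  mesh_lt : ∀ i < N, x (i + 1) - x i < δ

def riemannSum (f : ℝ → ℝ) (N : ℕ) (x t : ℕ → ℝ) : ℝ :=
  ∑ i ∈ Finset.range N, f (t i) * (x (i + 1) - x i)

theorem riemannIntegralOn_iff {f : ℝ → ℝ} {a b I : ℝ} :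
    RiemannIntegralOn f a b I ↔ ∀ ε > 0, ∃ δ > 0, ∀ N x t, IsFinePartition a b δ N x →
      (∀ i < N, t i ∈ Icc (x i) (x (i + 1))) → |riemannSum f N x t - I| < ε := by
  refine forall₂_congr fun ε _ ↦ exists_congr fun δ ↦ and_congr_right fun _ ↦ ?_
  exact ⟨fun h N x t hx ht ↦ h N x t hx.first hx.last hx.lt_succ hx.mesh_lt ht,
    fun h N x t h0 hN hlt hmesh ht ↦ h N x t ⟨h0, hN, hlt, hmesh⟩ ht⟩

theorem exists_isFinePartition {a b δ : ℝ} (hab : a < b) (hδ : 0 < δ) :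
    ∃ N x, IsFinePartition a b δ N x := by
  obtain ⟨N, hN⟩ := exists_nat_gt ((b - a) / δ)
  have hN0 : (0 : ℝ) < N := lt_trans (div_pos (sub_pos.2 hab) hδ) hN
  have hstep : (b - a) / N < δ := by
    rwa [div_lt_iff₀ hN0, mul_comm, ← div_lt_iff₀ hδ]
  refine ⟨N, fun i ↦ a + i * ((b - a) / N), by simp, by field_simp; ring, fun i _ ↦ ?_,
    fun i _ ↦ ?_⟩
  · push_cast; linarith [div_pos (sub_pos.2 hab) hN0]
  · push_cast; linarith

namespace IsFinePartition

variable {a b δ : ℝ} {N : ℕ} {x : ℕ → ℝ}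

theorem monotoneOn (hx : IsFinePartition a b δ N x) : MonotoneOn x (Iic N) :=
  (strictMonoOn_Iic_of_lt_succ hx.lt_succ).monotoneOn

theorem mem_Icc (hx : IsFinePartition a b δ N x) {i : ℕ} (hi : i ≤ N) : x i ∈ Icc a b :=
  ⟨hx.first ▸ hx.monotoneOn (Nat.zero_le N) hi (Nat.zero_le i),
    hx.last ▸ hx.monotoneOn hi (le_refl N) hi⟩

theorem Icc_subset (hx : IsFinePartition a b δ N x) {i : ℕ} (hi : i < N) :
    Icc (x i) (x (i + 1)) ⊆ Icc a b :=
  Icc_subset_Icc (hx.mem_Icc hi.le).1 (hx.mem_Icc hi).2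

theorem exists_mem_Ico (hx : IsFinePartition a b δ N x) {y : ℝ} (hy : y ∈ Ico a b) :
    ∃ i < N, y ∈ Ico (x i) (x (i + 1)) := by
  simpa only [mem_iUnion, Finset.mem_range, exists_prop] using
    Ico_subset_biUnion_Ico N x (hx.first ▸ hx.last ▸ hy)

theorem volume_le_sum (hx : IsFinePartition a b δ N x) {S : Set ℝ} (hS : S ⊆ Icc a b)
    {T : Finset ℕ} (hT : ∀ i < N, (Ioo (x i) (x (i + 1)) ∩ S).Nonempty → i ∈ T) :
    volume S ≤ ∑ i ∈ T, ENNReal.ofReal (x (i + 1) - x i) := by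
  have hnodes : volume (x '' Iic N) = 0 := ((finite_Iic N).image x).measure_zero volume
  calc volume S = volume (S \ x '' Iic N) := (measure_sdiff_null hnodes).symm
    _ ≤ volume (⋃ i ∈ T, Icc (x i) (x (i + 1))) := by
        refine measure_mono fun z ⟨hzS, hz⟩ ↦ ?_
        have hzb : z < b := (hS hzS).2.lt_of_ne fun h ↦ hz ⟨N, self_mem_Iic, hx.last.trans h.symm⟩
        obtain ⟨i, hi, hzi⟩ := hx.exists_mem_Ico ⟨(hS hzS).1, hzb⟩
        have hzi' : z ∈ Ioo (x i) (x (i + 1)) :=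
          ⟨hzi.1.lt_of_ne fun h ↦ hz ⟨i, hi.le, h⟩, hzi.2⟩
        exact mem_biUnion (hT i hi ⟨z, hzi', hzS⟩) (Ioo_subset_Icc_self hzi')
    _ ≤ ∑ i ∈ T, ENNReal.ofReal (x (i + 1) - x i) := by
        refine (measure_biUnion_finset_le _ _).trans_eq ?_
        simp only [Real.volume_Icc]

theorem intervalIntegrable {g : ℝ → ℝ} (hx : IsFinePartition a b δ N x)
    (hg : IntegrableOn g (Icc a b)) {i : ℕ} (hi : i < N) :
    IntervalIntegrable g volume (x i) (x (i + 1)) :=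
  (intervalIntegrable_iff_integrableOn_Icc_of_le (hx.lt_succ i hi).le).2
    (hg.mono_set (hx.Icc_subset hi))

theorem sum_integral {g : ℝ → ℝ} (hx : IsFinePartition a b δ N x)
    (hg : IntegrableOn g (Icc a b)) :
    ∑ i ∈ Finset.range N, ∫ y in x i..x (i + 1), g y = ∫ y in a..b, g y := by
  rw [intervalIntegral.sum_integral_adjacent_intervals (a := x)
    fun i hi ↦ hx.intervalIntegrable hg hi, hx.first, hx.last]

theorem riemannSum_sub_integral {f : ℝ → ℝ} (hx : IsFinePartition a b δ N x)
    (hf : IntegrableOn f (Icc a b)) (t : ℕ → ℝ) :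
    riemannSum f N x t - ∫ y in a..b, f y =
      ∑ i ∈ Finset.range N, ∫ y in x i..x (i + 1), (f (t i) - f y) := by
  rw [riemannSum, ← hx.sum_integral hf, ← Finset.sum_sub_distrib]
  refine Finset.sum_congr rfl fun i hi ↦ ?_
  rw [intervalIntegral.integral_sub intervalIntegrable_const
    (hx.intervalIntegrable hf (Finset.mem_range.1 hi)), intervalIntegral.integral_const,
    smul_eq_mul, mul_comm]

end IsFinePartition

theorem aestronglyMeasurable_restrict_of_null_not_continuousAt {α β : Type*}
    [TopologicalSpace α] [MeasurableSpace α] [OpensMeasurableSpace α] [PseudoMetricSpace β]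
    [SecondCountableTopologyEither α β] {μ : Measure α} {f : α → β} {s : Set α}
    (hf : μ {x | x ∈ s ∧ ¬ ContinuousAt f x} = 0) : AEStronglyMeasurable f (μ.restrict s) :=
  ((continuousOn_of_forall_continuousAt fun _ h ↦ h).aestronglyMeasurable
    (measurableSet_of_continuousAt f)).mono_measure (Measure.restrict_mono_ae (ae_le_set.2 hf))

theorem integrableOn_Icc_of_null_not_continuousWithinAt {f : ℝ → ℝ} {a b C : ℝ}
    (hC : ∀ y ∈ Icc a b, ‖f y‖ ≤ C)
    (hf : volume {x | x ∈ Icc a b ∧ ¬ ContinuousWithinAt f (Icc a b) x} = 0) :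
    IntegrableOn f (Icc a b) := by
  have hmeas : AEStronglyMeasurable f (volume.restrict (Ioo a b)) := by
    refine aestronglyMeasurable_restrict_of_null_not_continuousAt (measure_mono_null ?_ hf)
    exact fun x ⟨hx, hfx⟩ ↦ ⟨Ioo_subset_Icc_self hx,
      fun h ↦ hfx (h.continuousAt (Icc_mem_nhds hx.1 hx.2))⟩
  rw [integrableOn_Icc_iff_integrableOn_Ioo]
  exact .of_bound measure_Ioo_lt_top hmeas C
    (ae_restrict_of_forall_mem measurableSet_Ioo fun y hy ↦ hC y (Ioo_subset_Icc_self hy))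

theorem IsCompact.exists_isOpen_measure_lt_forall_dist_le {α β : Type*} [PseudoMetricSpace α]
    [PseudoMetricSpace β] [MeasurableSpace α] {μ : Measure α} [μ.OuterRegular] {f : α → β}
    {K : Set α} (hK : IsCompact K) (hf : μ {x | x ∈ K ∧ ¬ ContinuousWithinAt f K x} = 0)
    {ε : ℝ} (hε : 0 < ε) {η : ENNReal} (hη : η ≠ 0) :
    ∃ U, IsOpen U ∧ μ U < η ∧
      ∃ δ > 0, ∀ y ∈ K \ U, ∀ z ∈ K, dist z y < δ → dist (f z) (f y) ≤ ε := by
  obtain ⟨U, hDU, hU, hμU⟩ := exists_isOpen_lt_add (μ := μ)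
    {x | x ∈ K ∧ ¬ ContinuousWithinAt f K x} (by simp [hf]) hη
  rw [hf, zero_add] at hμU
  have hosc : ∀ y ∈ K \ U, oscillationWithin f K y < ENNReal.ofReal ε := fun y hy ↦ by
    have hcont : ContinuousWithinAt f K y := by_contra fun h ↦ hy.2 (hDU ⟨hy.1, h⟩)
    rw [hcont.oscillationWithin_eq_zero]
    exact ENNReal.ofReal_pos.2 hε
  obtain ⟨δ, hδ, hdiam⟩ := (hK.diff hU).uniform_oscillationWithin hosc
  refine ⟨U, hU, hμU, δ, hδ, fun y hy z hz hzy ↦ ?_⟩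
  rw [← edist_le_ofReal hε.le]
  have hzball : z ∈ Metric.eball y (ENNReal.ofReal δ) ∩ K := ⟨edist_lt_ofReal.2 hzy, hz⟩
  have hyball : y ∈ Metric.eball y (ENNReal.ofReal δ) ∩ K := ⟨by simpa using hδ, hy.1⟩
  exact (Metric.edist_le_ediam_of_mem (mem_image_of_mem f hzball)
    (mem_image_of_mem f hyball)).trans (hdiam y hy)

theorem abs_riemannSum_sub_integral_le {f : ℝ → ℝ} {a b δ C ε : ℝ} {U : Set ℝ}
    (hC : ∀ y ∈ Icc a b, ‖f y‖ ≤ C) (hf : IntegrableOn f (Icc a b)) (hε : 0 ≤ ε)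
    (hU : MeasurableSet U) (hUfin : volume U ≠ ⊤)
    (hδ : ∀ y ∈ Icc a b \ U, ∀ z ∈ Icc a b, dist z y < δ → dist (f z) (f y) ≤ ε)
    {N : ℕ} {x t : ℕ → ℝ} (hx : IsFinePartition a b δ N x)
    (ht : ∀ i < N, t i ∈ Icc (x i) (x (i + 1))) :
    |riemannSum f N x t - ∫ y in a..b, f y| ≤ (b - a) * ε + 2 * C * volume.real U := by
  have hab : a ≤ b := (hx.mem_Icc le_rfl).1.trans_eq hx.last
  have hC0 : 0 ≤ C := (norm_nonneg _).trans (hC a (left_mem_Icc.2 hab))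
  have hind : Integrable (U.indicator fun _ ↦ 2 * C) :=
    (integrable_indicator_iff hU).2 (integrableOn_const hUfin)
  have hg : IntegrableOn (fun y ↦ ε + U.indicator (fun _ ↦ 2 * C) y) (Icc a b) :=
    (integrableOn_const measure_Icc_lt_top.ne).add hind.integrableOn
  have hpt : ∀ i < N, ∀ y ∈ Icc (x i) (x (i + 1)),
      ‖f (t i) - f y‖ ≤ ε + U.indicator (fun _ ↦ 2 * C) y := by
    intro i hi y hy
    have hyab := hx.Icc_subset hi hy
    have htab := hx.Icc_subset hi (ht i hi)
    by_cases hyU : y ∈ U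
    · rw [indicator_of_mem hyU]
      linarith [norm_sub_le (f (t i)) (f y), hC _ hyab, hC _ htab]
    · rw [indicator_of_notMem hyU, add_zero]
      exact hδ y ⟨hyab, hyU⟩ _ htab
        ((Real.dist_le_of_mem_Icc (ht i hi) hy).trans_lt (hx.mesh_lt i hi))
  calc |riemannSum f N x t - ∫ y in a..b, f y|
      ≤ ∑ i ∈ Finset.range N, ‖∫ y in x i..x (i + 1), (f (t i) - f y)‖ := by
        rw [hx.riemannSum_sub_integral hf t]; exact Finset.abs_sum_le_sum_abs _ _
    _ ≤ ∑ i ∈ Finset.range N, ∫ y in x i..x (i + 1), (ε + U.indicator (fun _ ↦ 2 * C) y) := by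
        refine Finset.sum_le_sum fun i hi ↦ ?_
        have hi := Finset.mem_range.1 hi
        exact intervalIntegral.norm_integral_le_of_norm_le (hx.lt_succ i hi).le
          (.of_forall fun y hy ↦ hpt i hi y (Ioc_subset_Icc_self hy)) (hx.intervalIntegrable hg hi)
    _ = (b - a) * ε + ∫ y in Ioc a b, U.indicator (fun _ ↦ 2 * C) y := by
        rw [hx.sum_integral hg, intervalIntegral.integral_add intervalIntegrable_const
          hind.intervalIntegrable, intervalIntegral.integral_const, smul_eq_mul,
          intervalIntegral.integral_of_le hab]
    _ ≤ (b - a) * ε + ∫ y, U.indicator (fun _ ↦ 2 * C) y := by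
        gcongr
        · exact .of_forall (indicator_nonneg fun _ _ ↦ by positivity)
        · exact Measure.restrict_le_self
    _ = (b - a) * ε + 2 * C * volume.real U := by
        rw [integral_indicator_const _ hU, smul_eq_mul, mul_comm (volume.real U)]

theorem riemannIntegralOn_integral {f : ℝ → ℝ} {a b C : ℝ} (hab : a ≤ b)
    (hC : ∀ y ∈ Icc a b, ‖f y‖ ≤ C)
    (hf : volume {x | x ∈ Icc a b ∧ ¬ ContinuousWithinAt f (Icc a b) x} = 0) :
    RiemannIntegralOn f a b (∫ y in a..b, f y) := by
  have hC0 : 0 ≤ C := (norm_nonneg _).trans (hC a (left_mem_Icc.2 hab))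
  rw [riemannIntegralOn_iff]
  intro ε hε
  obtain ⟨ε₁, hε₁, hε₁ε⟩ := exists_pos_mul_lt (half_pos hε) (b - a)
  obtain ⟨ε₂, hε₂, hε₂ε⟩ := exists_pos_mul_lt (half_pos hε) (2 * C)
  obtain ⟨U, hU, hμU, δ, hδ, hδU⟩ := isCompact_Icc.exists_isOpen_measure_lt_forall_dist_le hf
    hε₁ (ENNReal.ofReal_pos.2 hε₂).ne'
  have hUε₂ : volume.real U ≤ ε₂ := ENNReal.toReal_le_of_le_ofReal hε₂.le hμU.le
  refine ⟨δ, hδ, fun N x t hx ht ↦ ?_⟩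
  calc |riemannSum f N x t - ∫ y in a..b, f y|
      ≤ (b - a) * ε₁ + 2 * C * volume.real U :=
        abs_riemannSum_sub_integral_le hC (integrableOn_Icc_of_null_not_continuousWithinAt hC hf)
          hε₁.le hU.measurableSet hμU.ne_top hδU hx ht
    _ ≤ (b - a) * ε₁ + 2 * C * ε₂ := by gcongr
    _ < ε := by linarith

theorem exists_lt_sub_of_ofReal_lt_oscillationWithin {α : Type*} [TopologicalSpace α]
    {f : α → ℝ} {D s : Set α} {z : α} {c : ℝ}
    (hc : ENNReal.ofReal c < oscillationWithin f D z) (hs : s ∈ 𝓝[D] z) :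
    ∃ u ∈ s, ∃ v ∈ s, c < f u - f v := by
  have hdiam : ¬ Metric.ediam (f '' s) ≤ ENNReal.ofReal c :=
    not_le.2 (hc.trans_le (biInf_le Metric.ediam (Filter.image_mem_map hs)))
  simp only [Metric.ediam_image_le_iff, not_forall, not_le, exists_prop] at hdiam
  obtain ⟨u, hu, v, hv, huv⟩ := hdiam
  rw [edist_dist, Real.dist_eq, ENNReal.ofReal_lt_ofReal_iff', lt_abs, neg_sub] at huv
  exact huv.1.elim (fun h ↦ ⟨u, hu, v, hv, h⟩) (fun h ↦ ⟨v, hv, u, hu, h⟩)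

theorem exists_tags_lt_sub {f : ℝ → ℝ} {D : Set ℝ} {c p q : ℝ} (hc : 0 ≤ c) (hpq : p ≤ q) :
    ∃ u ∈ Icc p q, ∃ v ∈ Icc p q, f v ≤ f u ∧
      ((∃ z ∈ Ioo p q, ENNReal.ofReal c < oscillationWithin f D z) → c < f u - f v) := by
  by_cases h : ∃ z ∈ Ioo p q, ENNReal.ofReal c < oscillationWithin f D z
  · obtain ⟨z, hz, hzc⟩ := h
    obtain ⟨u, hu, v, hv, huv⟩ := exists_lt_sub_of_ofReal_lt_oscillationWithin hzc
      (mem_nhdsWithin_of_mem_nhds (isOpen_Ioo.mem_nhds hz))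
    exact ⟨u, Ioo_subset_Icc_self hu, v, Ioo_subset_Icc_self hv, by linarith, fun _ ↦ huv⟩
  · exact ⟨p, left_mem_Icc.2 hpq, p, left_mem_Icc.2 hpq, le_rfl, fun h' ↦ absurd h' h⟩

theorem volume_setOf_ofReal_lt_oscillationWithin_le {f : ℝ → ℝ} {a b c I ε : ℝ} (hab : a < b)
    (hI : RiemannIntegralOn f a b I) (hc : 0 < c) (hε : 0 < ε) :
    volume {z | z ∈ Icc a b ∧ ENNReal.ofReal c < oscillationWithin f (Icc a b) z} ≤
      ENNReal.ofReal ε := by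
  classical
  set D := {z | z ∈ Icc a b ∧ ENNReal.ofReal c < oscillationWithin f (Icc a b) z}
  obtain ⟨δ, hδ, hsum⟩ := riemannIntegralOn_iff.1 hI (c * ε / 2) (by positivity)
  obtain ⟨N, x, hx⟩ := exists_isFinePartition hab hδ
  have hlen : ∀ i < N, 0 ≤ x (i + 1) - x i := fun i hi ↦ sub_nonneg.2 (hx.lt_succ i hi).le
  have htags : ∀ i, ∃ u v : ℝ, i < N → u ∈ Icc (x i) (x (i + 1)) ∧ v ∈ Icc (x i) (x (i + 1)) ∧
      f v ≤ f u ∧ ((Ioo (x i) (x (i + 1)) ∩ D).Nonempty → c < f u - f v) := fun i ↦ by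
    by_cases hi : i < N
    · obtain ⟨u, hu, v, hv, hvu, hgap⟩ :=
        exists_tags_lt_sub (f := f) (D := Icc a b) hc.le (hx.lt_succ i hi).le
      exact ⟨u, v, fun _ ↦ ⟨hu, hv, hvu, fun ⟨z, hz, _, hzc⟩ ↦ hgap ⟨z, hz, hzc⟩⟩⟩
    · exact ⟨0, 0, fun h ↦ absurd h hi⟩
  choose u v htags using htags
  set T := (Finset.range N).filter fun i ↦ (Ioo (x i) (x (i + 1)) ∩ D).Nonempty
  have hT : c * ∑ i ∈ T, (x (i + 1) - x i) < c * ε :=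
    calc c * ∑ i ∈ T, (x (i + 1) - x i)
        ≤ ∑ i ∈ Finset.range N, (f (u i) - f (v i)) * (x (i + 1) - x i) := by
          rw [Finset.mul_sum]
          refine (Finset.sum_le_sum fun i hi ↦ ?_).trans
            (Finset.sum_le_sum_of_subset_of_nonneg (Finset.filter_subset _ _) fun i hi _ ↦ ?_)
          · obtain ⟨hi, hbad⟩ := Finset.mem_filter.1 hi
            have hi := Finset.mem_range.1 hi
            exact mul_le_mul_of_nonneg_right ((htags i hi).2.2.2 hbad).le (hlen i hi)
          · have hi := Finset.mem_range.1 hi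
            exact mul_nonneg (sub_nonneg.2 (htags i hi).2.2.1) (hlen i hi)
      _ = riemannSum f N x u - riemannSum f N x v := by
          simp only [riemannSum, ← Finset.sum_sub_distrib, sub_mul]
      _ < c * ε := by
          have hu := hsum N x u hx fun i hi ↦ (htags i hi).1
          have hv := hsum N x v hx fun i hi ↦ (htags i hi).2.1
          rw [abs_lt] at hu hv
          linarith [hu.2, hv.1]
  calc volume D ≤ ∑ i ∈ T, ENNReal.ofReal (x (i + 1) - x i) :=
        hx.volume_le_sum (fun z hz ↦ hz.1)
          fun i hi h ↦ Finset.mem_filter.2 ⟨Finset.mem_range.2 hi, h⟩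
    _ = ENNReal.ofReal (∑ i ∈ T, (x (i + 1) - x i)) :=
        (ENNReal.ofReal_sum_of_nonneg fun i hi ↦
          hlen i (Finset.mem_range.1 (Finset.mem_filter.1 hi).1)).symm
    _ ≤ ENNReal.ofReal ε := ENNReal.ofReal_le_ofReal (le_of_mul_le_mul_left hT.le hc)

theorem volume_setOf_ofReal_lt_oscillationWithin_eq_zero {f : ℝ → ℝ} {a b c I : ℝ} (hab : a < b)
    (hI : RiemannIntegralOn f a b I) (hc : 0 < c) :
    volume {z | z ∈ Icc a b ∧ ENNReal.ofReal c < oscillationWithin f (Icc a b) z} = 0 :=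
  le_antisymm (ENNReal.le_of_forall_pos_le_add fun ε hε _ ↦ by
    simpa using volume_setOf_ofReal_lt_oscillationWithin_le hab hI hc (NNReal.coe_pos.2 hε))
    bot_le

theorem setOf_not_continuousWithinAt_subset_iUnion {α β : Type*} [TopologicalSpace α]
    [PseudoEMetricSpace β] (f : α → β) (s : Set α) :
    {x | x ∈ s ∧ ¬ ContinuousWithinAt f s x} ⊆
      ⋃ n : ℕ, {x | x ∈ s ∧ ENNReal.ofReal (1 / (n + 1)) < oscillationWithin f s x} := by
  intro x ⟨hx, hfx⟩
  have hosc : 0 < oscillationWithin f s x :=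
    pos_iff_ne_zero.2 fun h ↦ hfx ((OscillationWithin.eq_zero_iff_continuousWithinAt f hx).1 h)
  obtain ⟨r, -, hr, hrosc⟩ := ENNReal.lt_iff_exists_real_btwn.1 hosc
  obtain ⟨n, hn⟩ := exists_nat_one_div_lt (ENNReal.ofReal_pos.1 hr)
  exact mem_iUnion.2
    ⟨n, hx, ((ENNReal.ofReal_lt_ofReal_iff_of_nonneg (by positivity)).2 hn).trans hrosc⟩

/-- Vitali–Lebesgue theorem: a bounded function on `[a,b]` is Riemann integrable iff
its set of points of discontinuity (within `[a,b]`) is a Lebesgue null set. -/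
theorem riemannIntegrable_iff_ae_continuous
    (a b : ℝ) (hab : a < b) (f : ℝ → ℝ)
    (hb : Bornology.IsBounded (f '' Icc a b)) :
    (∃ I : ℝ, RiemannIntegralOn f a b I) ↔
      volume {x | x ∈ Icc a b ∧ ¬ ContinuousWithinAt f (Icc a b) x} = 0 := by
  refine ⟨fun ⟨I, hI⟩ ↦ ?_, fun hf ↦ ?_⟩
  · exact measure_mono_null (setOf_not_continuousWithinAt_subset_iUnion f (Icc a b))
      (measure_iUnion_null fun _ ↦
        volume_setOf_ofReal_lt_oscillationWithin_eq_zero hab hI Nat.one_div_pos_of_nat)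
  · obtain ⟨C, hC⟩ := isBounded_iff_forall_norm_le.1 hb
    exact ⟨_, riemannIntegralOn_integral hab.le (fun y hy ↦ hC (f y) (mem_image_of_mem f hy)) hf⟩
end

section
/- Smith–Volterra–Cantor set: there exists a compact set K ⊆ [0,1] ⊆ ℝ with empty interior (equivalently, K contains no nondegenerate interval) whose one-dimensional Lebesgue measure equals 1/2. Consequently there exists a bounded open subset of ℝ whose topological boundary has positive Lebesgue measure (indeed measure 1/2). -/
open MeasureTheory Set
open scoped ENNReal

noncomputable section SVCAux

/-- An enumeration of the rationals. -/
private def svcE : ℕ ≃ ℚ := (Denumerable.eqv ℚ).symm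

/-- Parametrized open set: union of balls of radius `t * 2⁻¹ ^ n` around rationals. -/
private def svcU (t : ℝ) : Set ℝ :=
  ⋃ n : ℕ, Metric.ball ((svcE n : ℚ) : ℝ) (t * (2:ℝ)⁻¹ ^ n)

private lemma svcU_open (t : ℝ) : IsOpen (svcU t) :=
  isOpen_iUnion fun _ => Metric.isOpen_ball

private lemma svcU_mono {s t : ℝ} (hst : s ≤ t) : svcU s ⊆ svcU t := by
  refine Set.iUnion_mono fun n => Metric.ball_subset_ball ?_
  have h : (0:ℝ) ≤ (2:ℝ)⁻¹ ^ n := by positivity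
  nlinarith

private lemma svc_rat_mem {t : ℝ} (ht : 0 < t) (q : ℚ) : (q : ℝ) ∈ svcU t := by
  obtain ⟨n, rfl⟩ := svcE.surjective q
  exact Set.mem_iUnion.2 ⟨n, Metric.mem_ball_self (by positivity)⟩

private def svcF (t : ℝ) : ℝ≥0∞ := volume (Icc (0:ℝ) 1 ∩ svcU t)

private lemma svcF_le_one (t : ℝ) : svcF t ≤ 1 := by
  calc svcF t ≤ volume (Icc (0:ℝ) 1) := measure_mono Set.inter_subset_left
    _ = 1 := by simp [Real.volume_Icc]

private lemma svcF_ne_top (t : ℝ) : svcF t ≠ ⊤ :=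
  ne_top_of_le_ne_top ENNReal.one_ne_top (svcF_le_one t)

private lemma svcF_zero : svcF 0 = 0 := by
  have h : svcU 0 = ∅ := by
    simp [svcU, Metric.ball_eq_empty]
  simp [svcF, h]

private lemma svcF_mono {s t : ℝ} (hst : s ≤ t) : svcF s ≤ svcF t :=
  measure_mono (Set.inter_subset_inter_right _ (svcU_mono hst))

private lemma svcF_le_add {s t : ℝ} (hs : 0 ≤ s) (hst : s ≤ t) :
    svcF t ≤ svcF s + ENNReal.ofReal (4 * (t - s)) := by
  have hsub : Icc (0:ℝ) 1 ∩ svcU t ⊆ (Icc 0 1 ∩ svcU s) ∪ (svcU t \ svcU s) := by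
    intro x hx
    by_cases h : x ∈ svcU s
    · exact Or.inl ⟨hx.1, h⟩
    · exact Or.inr ⟨hx.2, h⟩
  have hdiff : svcU t \ svcU s ⊆
      ⋃ n : ℕ, (Metric.ball ((svcE n : ℚ) : ℝ) (t * (2:ℝ)⁻¹ ^ n) \
        Metric.ball ((svcE n : ℚ) : ℝ) (s * (2:ℝ)⁻¹ ^ n)) := by
    intro x hx
    obtain ⟨n, hn⟩ := Set.mem_iUnion.1 hx.1
    exact Set.mem_iUnion.2 ⟨n, hn, fun h => hx.2 (Set.mem_iUnion.2 ⟨n, h⟩)⟩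
  have hball : ∀ n : ℕ,
      volume (Metric.ball ((svcE n : ℚ) : ℝ) (t * (2:ℝ)⁻¹ ^ n) \
        Metric.ball ((svcE n : ℚ) : ℝ) (s * (2:ℝ)⁻¹ ^ n)) ≤
        ENNReal.ofReal (2 * (t - s)) * (2⁻¹ : ℝ≥0∞) ^ n := by
    intro n
    have hpw : (0:ℝ) ≤ (2:ℝ)⁻¹ ^ n := by positivity
    have hss : Metric.ball ((svcE n : ℚ) : ℝ) (s * (2:ℝ)⁻¹ ^ n) ⊆
        Metric.ball ((svcE n : ℚ) : ℝ) (t * (2:ℝ)⁻¹ ^ n) :=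
      Metric.ball_subset_ball (by nlinarith)
    have hdm := measure_diff hss measurableSet_ball.nullMeasurableSet
      (by rw [Real.volume_ball]; exact ENNReal.ofReal_ne_top)
    rw [hdm, Real.volume_ball, Real.volume_ball,
      ← ENNReal.ofReal_sub _ (by nlinarith)]
    have heq : 2 * (t * (2:ℝ)⁻¹ ^ n) - 2 * (s * (2:ℝ)⁻¹ ^ n)
        = (2 * (t - s)) * (2:ℝ)⁻¹ ^ n := by ring
    rw [heq, ENNReal.ofReal_mul (by nlinarith), ENNReal.ofReal_pow (by norm_num)]
    have h2 : ENNReal.ofReal (2:ℝ)⁻¹ = (2⁻¹ : ℝ≥0∞) := by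
      rw [ENNReal.ofReal_inv_of_pos (by norm_num)]
      norm_num
    rw [h2]
  have hsumle : volume (svcU t \ svcU s) ≤ ENNReal.ofReal (4 * (t - s)) := by
    calc volume (svcU t \ svcU s)
        ≤ ∑' n : ℕ, volume (Metric.ball ((svcE n : ℚ) : ℝ) (t * (2:ℝ)⁻¹ ^ n) \
            Metric.ball ((svcE n : ℚ) : ℝ) (s * (2:ℝ)⁻¹ ^ n)) :=
          (measure_mono hdiff).trans (measure_iUnion_le _)
      _ ≤ ∑' n : ℕ, ENNReal.ofReal (2 * (t - s)) * (2⁻¹ : ℝ≥0∞) ^ n :=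
          ENNReal.tsum_le_tsum hball
      _ = ENNReal.ofReal (2 * (t - s)) * ∑' n : ℕ, (2⁻¹ : ℝ≥0∞) ^ n :=
          ENNReal.tsum_mul_left
      _ = ENNReal.ofReal (2 * (t - s)) * 2 := by
          rw [ENNReal.tsum_geometric, ENNReal.one_sub_inv_two, inv_inv]
      _ = ENNReal.ofReal (4 * (t - s)) := by
          rw [show ((2:ℝ≥0∞) = ENNReal.ofReal 2) by norm_num,
            ← ENNReal.ofReal_mul (by nlinarith)]
          ring_nf
  calc svcF t ≤ volume ((Icc (0:ℝ) 1 ∩ svcU s) ∪ (svcU t \ svcU s)) := measure_mono hsub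
    _ ≤ svcF s + volume (svcU t \ svcU s) := measure_union_le _ _
    _ ≤ svcF s + ENNReal.ofReal (4 * (t - s)) := by gcongr

private lemma svc_exists : ∃ c : ℝ, 0 < c ∧ svcF c = 1 / 2 := by
  obtain ⟨n₀, hn₀⟩ := svcE.surjective 0
  set T : ℝ := 2 ^ n₀ * 2 with hT
  have hT0 : (0:ℝ) ≤ T := by positivity
  have hrad : T * (2:ℝ)⁻¹ ^ n₀ = 2 := by
    rw [hT, inv_pow]
    field_simp
  have hFT : svcF T = 1 := by
    have hsub : Icc (0:ℝ) 1 ⊆ svcU T := by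
      intro x hx
      refine Set.mem_iUnion.2 ⟨n₀, ?_⟩
      rw [hn₀, hrad]
      simp only [Metric.mem_ball, Real.dist_eq, Rat.cast_zero, sub_zero]
      rw [abs_lt]
      constructor <;> [linarith [hx.1]; linarith [hx.2]]
    rw [svcF, Set.inter_eq_self_of_subset_left hsub]
    simp [Real.volume_Icc]
  set g : ℝ → ℝ := fun t => (svcF t).toReal with hg
  have hglip : LipschitzOnWith 4 g (Icc 0 T) := by
    apply LipschitzOnWith.of_dist_le_mul
    intro x hx y hy
    wlog hxy : y ≤ x generalizing x y
    · rw [dist_comm, dist_comm x y]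
      exact this y hy x hx (le_of_not_ge hxy)
    have hmono : g y ≤ g x := by
      exact ENNReal.toReal_mono (svcF_ne_top x) (svcF_mono hxy)
    have hle : svcF x ≤ svcF y + ENNReal.ofReal (4 * (x - y)) := svcF_le_add hy.1 hxy
    have hgap : g x ≤ g y + 4 * (x - y) := by
      have h1 : (svcF x).toReal ≤ (svcF y + ENNReal.ofReal (4 * (x - y))).toReal :=
        ENNReal.toReal_mono (by
          exact ENNReal.add_ne_top.2 ⟨svcF_ne_top y, ENNReal.ofReal_ne_top⟩) hle
      rwa [ENNReal.toReal_add (svcF_ne_top y) ENNReal.ofReal_ne_top,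
        ENNReal.toReal_ofReal (by nlinarith)] at h1
    rw [Real.dist_eq, Real.dist_eq, abs_of_nonneg (by linarith),
      abs_of_nonneg (by linarith)]
    push_cast
    linarith
  have hcont : ContinuousOn g (Icc 0 T) := hglip.continuousOn
  have hmem : (1/2 : ℝ) ∈ Icc (g 0) (g T) := by
    have h0 : g 0 = 0 := by simp [hg, svcF_zero]
    have h1 : g T = 1 := by simp [hg, hFT]
    rw [h0, h1]
    constructor <;> norm_num
  obtain ⟨c, hcmem, hgc⟩ := intermediate_value_Icc hT0 hcont hmem
  refine ⟨c, ?_, ?_⟩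
  · rcases lt_or_eq_of_le hcmem.1 with h | h
    · exact h
    · exfalso
      rw [← h] at hgc
      simp [hg, svcF_zero] at hgc
  · have := ENNReal.ofReal_toReal (svcF_ne_top c)
    rw [hg] at hgc
    simp only at hgc
    rw [← this, hgc]
    rw [ENNReal.ofReal_div_of_pos (by norm_num)]
    norm_num

end SVCAux

/-- Smith–Volterra–Cantor set: there is a compact subset of `[0,1]` with empty interior
and Lebesgue measure `1/2`; consequently there is a bounded open subset of `ℝ` whose
boundary has Lebesgue measure `1/2`. -/
theorem exists_smith_volterra_cantor_set :
    (∃ K : Set ℝ, K ⊆ Set.Icc 0 1 ∧ IsCompact K ∧ interior K = ∅ ∧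
      volume K = 1 / 2) ∧
    (∃ O : Set ℝ, IsOpen O ∧ Bornology.IsBounded O ∧
      volume (frontier O) = 1 / 2) := by
  obtain ⟨c, hc0, hfc⟩ := svc_exists
  have hUopen := svcU_open c
  have hrat : ∀ q : ℚ, (q : ℝ) ∈ svcU c := svc_rat_mem hc0
  have hmeasU : MeasurableSet (Icc (0:ℝ) 1 ∩ svcU c) :=
    measurableSet_Icc.inter hUopen.measurableSet
  have hOne : volume (Icc (0:ℝ) 1) = 1 := by simp [Real.volume_Icc]
  have hhalf : (1 : ℝ≥0∞) - 1 / 2 = 1 / 2 := by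
    rw [one_div, ENNReal.one_sub_inv_two]
  have hfc' : volume (Set.Icc (0:ℝ) 1 ∩ svcU c) = 1 / 2 := hfc
  constructor
  · refine ⟨Icc 0 1 \ svcU c, Set.diff_subset, isCompact_Icc.diff hUopen, ?_, ?_⟩
    · by_contra h
      obtain ⟨q, hq⟩ := Rat.denseRange_cast.exists_mem_open isOpen_interior
        (Set.nonempty_iff_ne_empty.2 h)
      exact (interior_subset hq).2 (hrat q)
    · rw [← Set.diff_self_inter, measure_diff Set.inter_subset_left
        hmeasU.nullMeasurableSet (hfc' ▸ (by norm_num : (1:ℝ≥0∞)/2 ≠ ⊤)),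
        hOne, hfc', hhalf]
  · set O : Set ℝ := svcU c ∩ Ioo 0 1 with hO
    have hOopen : IsOpen O := hUopen.inter isOpen_Ioo
    have hO_sub : O ⊆ Icc 0 1 := Set.inter_subset_right.trans Set.Ioo_subset_Icc_self
    refine ⟨O, hOopen, (Metric.isBounded_Ioo 0 1).subset Set.inter_subset_right, ?_⟩
    have hcl : closure O = Icc 0 1 := by
      apply Set.Subset.antisymm (closure_minimal hO_sub isClosed_Icc)
      intro x hx
      rw [mem_closure_iff]
      intro V hV hxV
      have hx' : x ∈ closure (Ioo (0:ℝ) 1) := by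
        rw [closure_Ioo (by norm_num : (0:ℝ) ≠ 1)]
        exact hx
      have hne : (V ∩ Ioo 0 1).Nonempty := (mem_closure_iff.1 hx') V hV hxV
      obtain ⟨q, hq⟩ := Rat.denseRange_cast.exists_mem_open (hV.inter isOpen_Ioo) hne
      exact ⟨q, hq.1, hrat q, hq.2⟩
    have hfr : frontier O = Icc 0 1 \ O := by
      rw [frontier, hcl, hOopen.interior_eq]
    have hvolO : volume O = 1 / 2 := by
      have hOeq : O = (Icc (0:ℝ) 1 ∩ svcU c) \ ({0, 1} : Set ℝ) := by
        ext x
        simp only [hO, Set.mem_inter_iff, Set.mem_Ioo, Set.mem_Icc, Set.mem_diff,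
          Set.mem_insert_iff, Set.mem_singleton_iff]
        constructor
        · rintro ⟨hU, h0, h1⟩
          exact ⟨⟨⟨h0.le, h1.le⟩, hU⟩, by push_neg; constructor <;> intro h <;> simp [h] at *⟩
        · rintro ⟨⟨⟨h0, h1⟩, hU⟩, hne⟩
          push_neg at hne
          exact ⟨hU, lt_of_le_of_ne h0 (Ne.symm hne.1), lt_of_le_of_ne h1 hne.2⟩
      rw [hOeq, measure_diff_null (by
        exact (Set.countable_insert.2 (Set.countable_singleton _)).measure_zero _), hfc']
    have hO_meas : MeasurableSet O := hOopen.measurableSet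
    rw [hfr, measure_diff hO_sub hO_meas.nullMeasurableSet
      (hvolO ▸ (by norm_num : (1:ℝ≥0∞)/2 ≠ ⊤)), hOne, hvolO, hhalf]
end
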